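/- arXiv:1411.3829 — 14 statements merged into one kernel-verified Lean document; each statement's English description precedes it below -/
import Mathlib

section
/- Let G be a finite group and f : G → ℂ. Suppose that for every prime p, every nontrivial group homomorphism γ : ZMod p → G and every x ∈ G one has ∑_{t ∈ ZMod p} f(x * γ(t)) = 0. Then for every integer n ≥ 2, every nontrivial group homomorphism γ : ZMod n → G and every x ∈ G one has ∑_{t ∈ ZMod n} f(x * γ(t)) = 0. (The Radon transform is determined by geodesics of prime length.) -/
/-- The Radon transform of `f` at `(x, γ)`: the sum of `f` over the geodesic
determined by the homomorphism `γ : C_n → G`, translated by `x`. -/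
noncomputable def radonSum {G : Type*} [Group G] {n : ℕ} [NeZero n]
    (f : G → ℂ) (γ : Multiplicative (ZMod n) →* G) (x : G) : ℂ :=
  ∑ t : ZMod n, f (x * γ (Multiplicative.ofAdd t))

/-- All Radon transforms of `f` (over geodesics of all lengths `n ≥ 2`) vanish. -/
def RadonNull (G : Type*) [Group G] (f : G → ℂ) : Prop :=
  ∀ (n : ℕ) (hn : 2 ≤ n) (γ : Multiplicative (ZMod n) →* G), γ ≠ 1 → ∀ x : G,
    haveI : NeZero n := ⟨by omega⟩
    radonSum f γ x = 0

/-- The Radon transform is injective on `G`. -/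
def RadonInjective (G : Type*) [Group G] : Prop :=
  ∀ f : G → ℂ, RadonNull G f → f = 0

/-!
If `γ : C_n → G` is nontrivial, Cauchy's theorem in the finite group `γ.range` gives a nontrivial
`γ' : C_p → G` with `p` prime and values in `γ.range`, say `γ' u = γ (a u)`. For every `t`, the
`γ'`-geodesic through `x * γ t` is `u ↦ x * γ (t + a u)`; averaging these vanishing sums over all
`t ∈ ZMod n` shows that `p` times the `γ`-sum vanishes.
-/

theorem Fintype.sum_eq_zero_of_forall_sum_add_eq_zero {A ι M : Type*} [AddGroup A] [Fintype A]
    [Fintype ι] [Nonempty ι] [AddCommMonoid M] [IsAddTorsionFree M] (F : A → M) (a : ι → A)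
    (h : ∀ t, ∑ i, F (t + a i) = 0) : ∑ t, F t = 0 := by
  have hcard : Fintype.card ι • ∑ t, F t = 0 :=
    calc Fintype.card ι • ∑ t, F t = ∑ i : ι, ∑ t, F (t + a i) := by
          rw [← Finset.card_univ, ← Finset.sum_const]
          exact Finset.sum_congr rfl fun i _ ↦ (Equiv.sum_comp (Equiv.addRight (a i)) F).symm
      _ = ∑ t, ∑ i, F (t + a i) := Finset.sum_comm
      _ = 0 := Fintype.sum_eq_zero _ h
  exact (nsmul_eq_zero_iff_right Fintype.card_ne_zero).mp hcard

theorem Subgroup.exists_prime_monoidHom_zmod_range_le {G : Type*} [Group G] {H : Subgroup G}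
    [Finite H] (hH : H ≠ ⊥) :
    ∃ p, p.Prime ∧ ∃ φ : Multiplicative (ZMod p) →* G, φ ≠ 1 ∧ φ.range ≤ H := by
  obtain ⟨p, hp, hpH⟩ := Nat.exists_prime_and_dvd (mt Subgroup.card_eq_one.mp hH)
  have : Fact p.Prime := ⟨hp⟩
  obtain ⟨h, hh⟩ := exists_prime_orderOf_dvd_card' p hpH
  have hcard : Nat.card (Subgroup.zpowers (h : G)) = p := by
    rw [Nat.card_zpowers, Subgroup.orderOf_coe, hh]
  let φ := (Subgroup.zpowers (h : G)).subtype.comp (zmodCyclicMulEquiv inferInstance).toMonoidHom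
  have hφ : φ.range = Subgroup.zpowers (h : G) := by
    rw [MonoidHom.range_comp, MonoidHom.range_eq_top_of_surjective _ (MulEquiv.surjective _),
      ← MonoidHom.range_eq_map, Subgroup.range_subtype]
  refine ⟨_, hcard ▸ hp, φ, ?_, hφ.trans_le (Subgroup.zpowers_le.mpr h.2)⟩
  rw [Ne, ← MonoidHom.range_eq_bot_iff, hφ, Subgroup.zpowers_eq_bot, ← orderOf_eq_one_iff,
    Subgroup.orderOf_coe, hh]
  exact hp.ne_one

theorem radon_prime_determines_general {G : Type*} [Group G] (f : G → ℂ)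
    (h : ∀ (p : ℕ) (hp : p.Prime) (γ : Multiplicative (ZMod p) →* G), γ ≠ 1 → ∀ x : G,
      haveI : NeZero p := ⟨hp.ne_zero⟩
      radonSum f γ x = 0) :
    RadonNull G f := by
  intro n hn γ hγ x
  have : NeZero n := ⟨by omega⟩
  have : Finite γ.range := Finite.of_surjective _ γ.rangeRestrict_surjective
  obtain ⟨p, hp, γ', hγ', hrange⟩ :=
    Subgroup.exists_prime_monoidHom_zmod_range_le (MonoidHom.range_eq_bot_iff.not.mpr hγ)
  have : NeZero p := ⟨hp.ne_zero⟩
  choose a ha using fun u : ZMod p ↦ hrange ⟨.ofAdd u, rfl⟩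
  refine Fintype.sum_eq_zero_of_forall_sum_add_eq_zero _ (fun u ↦ (a u).toAdd) fun t ↦ ?_
  simpa [radonSum, mul_assoc, ha] using h p hp γ' hγ' (x * γ (.ofAdd t))

theorem radon_prime_determines {G : Type*} [Group G] [Fintype G] (f : G → ℂ)
    (h : ∀ (p : ℕ) (hp : p.Prime) (γ : Multiplicative (ZMod p) →* G), γ ≠ 1 → ∀ x : G,
      haveI : NeZero p := ⟨hp.ne_zero⟩
      radonSum f γ x = 0) :
    RadonNull G f :=
  radon_prime_determines_general f h
end

section
/- Let G be a finite group and H a subgroup of G. If the Radon transform is injective on H, then the Radon transform is injective on G. -/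
set_option maxRecDepth 4000


theorem radon_injective_of_subgroup {G : Type*} [Group G] [Fintype G] (H : Subgroup G)
    (hH : RadonInjective H) : RadonInjective G := by
  intro f hf
  funext g
  have key : (fun h : H => f (g * (h : G))) = 0 := by
    apply hH
    intro n hn γ hγ x
    haveI : NeZero n := ⟨by omega⟩
    have hγ' : H.subtype.comp γ ≠ 1 := by
      intro h
      apply hγ
      rwa [show (1 : Multiplicative (ZMod n) →* G) = H.subtype.comp 1 from
        (MonoidHom.comp_one _).symm, MonoidHom.cancel_left H.subtype_injective] at h
    have := hf n hn (H.subtype.comp γ) hγ' (g * x)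
    unfold radonSum at this ⊢
    simp only [MonoidHom.coe_comp, Function.comp_apply, Subgroup.coe_subtype, mul_assoc] at this
    exact this
  have := congrFun key 1
  simpa using this
end

section
/- Let G be a nontrivial finite cyclic group. Then the Radon transform is not injective on G: there exists a nonzero function f : G → ℂ such that ∑_{t ∈ ZMod n} f(x * γ(t)) = 0 for every integer n ≥ 2, every nontrivial homomorphism γ : ZMod n → G and every x ∈ G. -/
/-!
A finite cyclic group `G` embeds into `ℂˣ` as the group of `|G|`-th roots of unity, giving an
injective character `χ`. Its Radon transform along `γ` at `x` is `χ x` times the sum of the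
character `χ ∘ γ` over `ZMod n`, which vanishes because `χ ∘ γ` is nontrivial whenever `γ` is.
So `χ` is a nonzero function in the kernel of the Radon transform.
-/

theorem IsCyclic.exists_monoidHom_units_injective (G M : Type*) [Group G] [Finite G] [IsCyclic G]
    [CommMonoid M] [HasEnoughRootsOfUnity M (Nat.card G)] :
    ∃ χ : G →* Mˣ, Function.Injective χ := by
  have : NeZero (Nat.card G) := ⟨Nat.card_pos.ne'⟩
  let e : G ≃* rootsOfUnity (Nat.card G) M :=
    mulEquivOfCyclicCardEq (HasEnoughRootsOfUnity.natCard_rootsOfUnity M _).symm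
  exact ⟨(rootsOfUnity _ M).subtype.comp e.toMonoidHom,
    Subtype.val_injective.comp e.injective⟩

theorem radonSum_monoidHom {G : Type*} [Group G] {n : ℕ} [NeZero n] (χ : G →* ℂ)
    (γ : Multiplicative (ZMod n) →* G) (x : G) :
    radonSum χ γ x = χ x * ∑ t, (χ.comp γ) t := by
  rw [radonSum, Finset.mul_sum]
  exact Fintype.sum_equiv Multiplicative.ofAdd _ _ fun t ↦ by simp

theorem radonNull_of_injective {G : Type*} [Group G] {χ : G →* ℂ}
    (hχ : Function.Injective χ) : RadonNull G χ := by
  intro n hn γ hγ x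
  have : NeZero n := ⟨by omega⟩
  have hχγ : χ.comp γ ≠ 1 := fun h ↦ hγ <| MonoidHom.ext fun t ↦
    hχ <| by simpa using DFunLike.congr_fun h t
  rw [radonSum_monoidHom, sum_hom_units_eq_zero _ hχγ, mul_zero]

theorem radon_not_injective_of_cyclic_general {G : Type*} [Group G] [Fintype G] [IsCyclic G] :
    ∃ f : G → ℂ, f ≠ 0 ∧ RadonNull G f := by
  obtain ⟨χ, hχ⟩ := IsCyclic.exists_monoidHom_units_injective G ℂ
  refine ⟨(Units.coeHom ℂ).comp χ, fun h ↦ ?_,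
    radonNull_of_injective (Units.val_injective.comp hχ)⟩
  simpa using congr_fun h 1

theorem radon_not_injective_of_cyclic {G : Type*} [Group G] [Fintype G] [IsCyclic G]
    [Nontrivial G] : ∃ f : G → ℂ, f ≠ 0 ∧ RadonNull G f :=
  radon_not_injective_of_cyclic_general
end

section
/- Let p be a prime and let G = ZMod p × ZMod p (written additively). If f : G → ℂ satisfies ∑_{t ∈ ZMod p} f(x + γ(t)) = 0 for every nontrivial group homomorphism γ : ZMod p → G and every x ∈ G, then f = 0. (The length-p Radon transform R_p is injective on C_p × C_p.) -/
/-!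
Every point `x` of the plane `𝔽_q²` lies on exactly `q + 1` lines, and these lines cover every
other point exactly once. Summing the `q + 1` line sums through `x` therefore gives `q • f x + ∑ f`.
The total sum `∑ f` vanishes because the plane is partitioned into parallel lines, so `q • f x = 0`.
-/

open Finset

section LineSums

variable {F M : Type*} [Field F] [Fintype F] [AddCommGroup M]

theorem sum_sum_line_add_sum_vertical_line (f : F × F → M) (x : F × F) :
    ∑ b : F, ∑ t : F, f (x + t • (1, b)) + ∑ t : F, f (x + t • (0, 1)) =
      Fintype.card F • f x + ∑ q, f q := by
  classical
  -- For `t ≠ 0`, `b ↦ t * b` is a bijection, so column `t` sums over a vertical line;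
  -- column `0` is `f x` counted once for each slope.
  have column : ∀ t : F, ∑ b : F, f (x + t • (1, b)) =
      (if t = 0 then Fintype.card F • f x - ∑ v : F, f (x + (0, v)) else 0) +
        ∑ v : F, f (x + (t, v)) := by
    intro t
    by_cases ht : t = 0
    · simp [ht]
    · simp only [Prod.smul_mk, smul_eq_mul, mul_one, ht, if_false, zero_add]
      exact Equiv.sum_comp (Equiv.mulLeft₀ t ht) (fun v ↦ f (x + (t, v)))
  rw [sum_comm, sum_congr rfl fun t _ ↦ column t, sum_add_distrib,
    sum_ite_eq', ← Fintype.sum_prod_type']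
  simp only [Prod.mk.eta, mem_univ, if_true, Prod.smul_mk, smul_eq_mul, mul_zero, mul_one]
  rw [show ∑ q, f (x + q) = ∑ q, f q from Equiv.sum_comp (Equiv.addLeft x) f]
  abel

theorem sum_eq_zero_of_horizontal_line_sums_eq_zero (f : F × F → M)
    (h : ∀ v : F, ∑ t : F, f ((0, v) + t • (1, 0)) = 0) : ∑ q, f q = 0 := by
  rw [Fintype.sum_prod_type_right]
  refine sum_eq_zero fun v _ ↦ ?_
  simpa using h v

theorem eq_zero_of_line_sums_eq_zero [IsAddTorsionFree M] (f : F × F → M)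
    (h : ∀ v : F × F, v ≠ 0 → ∀ x : F × F, ∑ t : F, f (x + t • v) = 0) : f = 0 := by
  have total : ∑ q, f q = 0 :=
    sum_eq_zero_of_horizontal_line_sums_eq_zero f fun v ↦ h _ (by simp) _
  funext x
  have key := sum_sum_line_add_sum_vertical_line f x
  simp only [fun b ↦ h (1, b) (by simp) x, h (0, 1) (by simp) x, total, sum_const_zero,
    add_zero] at key
  exact (nsmul_eq_zero_iff_right Fintype.card_ne_zero).mp key.symm

end LineSums

theorem radon_injective_Cp_sq (p : ℕ) [Fact p.Prime] (f : ZMod p × ZMod p → ℂ)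
    (h : ∀ γ : ZMod p →+ ZMod p × ZMod p, γ ≠ 0 → ∀ x : ZMod p × ZMod p,
      ∑ t : ZMod p, f (x + γ t) = 0) :
    f = 0 := by
  refine eq_zero_of_line_sums_eq_zero f fun v hv x ↦ ?_
  let γ : ZMod p →+ ZMod p × ZMod p := (LinearMap.toSpanSingleton (ZMod p) _ v).toAddMonoidHom
  have hγ : γ ≠ 0 := fun h0 ↦ hv <| by simpa [γ] using DFunLike.congr_fun h0 1
  simpa [γ] using h γ hγ x
end

section
/- Let p be a prime, G = ZMod p × ZMod p (written additively), and f : G → ℂ. Let Γ_p denote the finite set of all nontrivial group homomorphisms ZMod p → G. Then for every x ∈ G and every φ ∈ Γ_p the reconstruction formula holds: f(x) = (p² − p)⁻¹ · ∑_{γ ∈ Γ_p} ∑_{t ∈ ZMod p} f(x + γ(t)) − p⁻² · ∑_{y ∈ G} ∑_{t ∈ ZMod p} f(y + φ(t)). -/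
theorem radon_reconstruction_Cp_sq (p : ℕ) [Fact p.Prime]
    (Γ : Finset (ZMod p →+ ZMod p × ZMod p))
    (hΓ : ∀ γ : ZMod p →+ ZMod p × ZMod p, γ ∈ Γ ↔ γ ≠ 0)
    (f : ZMod p × ZMod p → ℂ) (x : ZMod p × ZMod p)
    (φ : ZMod p →+ ZMod p × ZMod p) (hφ : φ ∈ Γ) :
    f x = ((p : ℂ) ^ 2 - p)⁻¹ * ∑ γ ∈ Γ, ∑ t : ZMod p, f (x + γ t)
        - ((p : ℂ) ^ 2)⁻¹ * ∑ y : ZMod p × ZMod p, ∑ t : ZMod p, f (y + φ t) := by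
  have hp : p.Prime := Fact.out
  haveI : NeZero p := ⟨hp.ne_zero⟩
  set S : ℂ := ∑ y : ZMod p × ZMod p, f y with hS
  -- every additive hom is t ↦ t • (γ 1)
  have key : ∀ (γ : ZMod p →+ ZMod p × ZMod p) (t : ZMod p), γ t = t • γ 1 := by
    intro γ t
    have ht : ((t.val : ℕ) : ZMod p) = t := by simp [ZMod.natCast_val, ZMod.cast_id]
    conv_lhs => rw [← ht]
    rw [show ((t.val : ℕ) : ZMod p) = (t.val : ℕ) • (1 : ZMod p) by simp [nsmul_eq_mul]]
    rw [map_nsmul, ← Nat.cast_smul_eq_nsmul (ZMod p), ht]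
  -- shift sum is S
  have shift : ∀ a : ZMod p × ZMod p, ∑ y : ZMod p × ZMod p, f (y + a) = S := by
    intro a
    exact Fintype.sum_bijective (fun y => y + a) (Equiv.addRight a).bijective
      (fun y => f (y + a)) f (fun y => rfl)
  have hcardZ : (Finset.univ : Finset (ZMod p)).card = p := by simp [ZMod.card]
  have hcardG : (Finset.univ : Finset (ZMod p × ZMod p)).card = p ^ 2 := by
    simp [ZMod.card, sq]
  -- first double sum
  have h1 : ∑ γ ∈ Γ, ∑ t : ZMod p, f (x + γ t)
      = ∑ g ∈ Finset.univ \ {(0 : ZMod p × ZMod p)}, ∑ t : ZMod p, f (x + t • g) := by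
    apply Finset.sum_nbij' (i := fun γ => γ 1)
      (j := fun g => AddMonoidHom.mk' (fun t => t • g) (fun a b => add_smul a b g))
    · intro γ hγ
      simp only [Finset.mem_sdiff, Finset.mem_univ, Finset.mem_singleton, true_and]
      intro h0
      exact (hΓ γ).mp hγ (AddMonoidHom.ext fun t => by rw [key γ t, h0, smul_zero]; rfl)
    · intro g hg
      simp only [Finset.mem_sdiff, Finset.mem_univ, Finset.mem_singleton, true_and] at hg
      rw [hΓ]
      intro h0
      apply hg
      have := congrArg (fun ψ : ZMod p →+ ZMod p × ZMod p => ψ 1) h0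
      simpa using this
    · intro γ hγ
      exact AddMonoidHom.ext fun t => by simp [key γ t]
    · intro g hg
      simp
    · intro γ hγ
      exact Finset.sum_congr rfl fun t _ => by rw [key γ t]
  have h2 : ∑ g : ZMod p × ZMod p, ∑ t : ZMod p, f (x + t • g)
      = ((p : ℂ) - 1) * S + (p ^ 2 : ℂ) * f x := by
    rw [Finset.sum_comm]
    have inner : ∀ t : ZMod p, t ≠ 0 →
        ∑ g : ZMod p × ZMod p, f (x + t • g) = S := by
      intro t ht
      have hbij : Function.Bijective (fun g : ZMod p × ZMod p => x + t • g) := by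
        constructor
        · intro a b hab
          simp only [add_right_inj] at hab
          exact smul_right_injective (ZMod p × ZMod p) ht hab
        · intro y
          exact ⟨t⁻¹ • (y - x), by simp [smul_smul, mul_inv_cancel₀ ht]⟩
      exact Fintype.sum_bijective _ hbij (fun g => f (x + t • g)) f (fun g => rfl)
    rw [← Finset.add_sum_erase _ _ (Finset.mem_univ (0 : ZMod p))]
    have e1 : ∑ g : ZMod p × ZMod p, f (x + (0 : ZMod p) • g) = (p ^ 2 : ℂ) * f x := by
      simp [Finset.sum_const, hcardG, mul_comm]
    have e2 : ∑ t ∈ Finset.univ.erase (0 : ZMod p),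
        ∑ g : ZMod p × ZMod p, f (x + t • g) = ((p : ℂ) - 1) * S := by
      rw [Finset.sum_congr rfl fun t ht => inner t (Finset.mem_erase.mp ht).1]
      rw [Finset.sum_const, Finset.card_erase_of_mem (Finset.mem_univ _), hcardZ,
        nsmul_eq_mul, Nat.cast_sub hp.one_lt.le, Nat.cast_one]
    rw [e1, e2]; ring
  have h3 : ∑ g ∈ Finset.univ \ {(0 : ZMod p × ZMod p)}, ∑ t : ZMod p, f (x + t • g)
      = ((p : ℂ) - 1) * S + (p ^ 2 : ℂ) * f x - (p : ℂ) * f x := by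
    rw [Finset.sum_sdiff_eq_sub (Finset.subset_univ _), h2, Finset.sum_singleton]
    simp [Finset.sum_const, hcardZ, mul_comm]
  have h4 : ∑ y : ZMod p × ZMod p, ∑ t : ZMod p, f (y + φ t) = (p : ℂ) * S := by
    rw [Finset.sum_comm]
    rw [Finset.sum_congr rfl fun t _ => shift (φ t)]
    simp [Finset.sum_const, hcardZ, mul_comm]
  rw [h1, h3, h4]
  have hp0 : (p : ℂ) ≠ 0 := Nat.cast_ne_zero.mpr hp.ne_zero
  have hp1 : (p : ℂ) ≠ 1 := by
    intro h
    exact hp.one_lt.ne' (Nat.cast_injective (h.trans Nat.cast_one.symm))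
  have hpp : ((p : ℂ) ^ 2 - p) ≠ 0 := by
    have h : ((p : ℂ) ^ 2 - p) = p * (p - 1) := by ring
    rw [h]
    exact mul_ne_zero hp0 (sub_ne_zero.mpr hp1)
  field_simp
  ring
end

section
/- Let G₁ and G₂ be finite groups. The Radon transform is not injective on the direct product G₁ × G₂ if and only if the Radon transform is not injective on G₁, the Radon transform is not injective on G₂, and the orders |G₁| and |G₂| are coprime. -/
/-!
If `f₁`, `f₂` are nonzero Radon-null functions and `|G₁|`, `|G₂|` are coprime, then so is
`f₁ ⊗ f₂` on `G₁ × G₂`: for `γ = (γ₁, γ₂) : C_n → G₁ × G₂` the orders of `range γ₁` and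
`range γ₂` are coprime, so `C_n → range γ₁ × range γ₂` is onto and the Radon sum of `f₁ ⊗ f₂`
along `γ` is a multiple of the product of the coset sums of `f₁` over `range γ₁` and of `f₂` over
`range γ₂`. One of these ranges is nontrivial, and its coset sum is a nonzero multiple of a Radon
sum, hence zero.

Conversely, Radon-injectivity passes from a subgroup to the whole group (apply it on each coset),
hence from `G₁` or `G₂` to `G₁ × G₂`. If a prime `p` divides both orders, `G₁ × G₂` contains
`C_p × C_p`, which is injective: the `p` non-vertical lines through the origin of `𝔽_p²` cover the
origin `p` times and every point off the vertical axis once, so their sums add up to `p f(0)` plus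
sums over vertical lines, all of which vanish.
-/

open Finset Function Multiplicative

theorem MonoidHom.sum_comp_of_surjective {A B M : Type*} [Group A] [Group B] [Fintype A]
    [Fintype B] [AddCommMonoid M] (φ : A →* B) (hφ : Surjective φ) (F : B → M) :
    ∑ a, F (φ a) = Nat.card φ.ker • ∑ b, F b := by
  classical
  have hfiber : ∀ b, #{a | φ a = b} = Nat.card φ.ker := fun b => by
    rw [MonoidHom.card_fiber_eq_of_mem_range φ (hφ b) ⟨1, map_one φ⟩, Nat.card_eq_fintype_card,
      Fintype.card_subtype]
    simp only [MonoidHom.mem_ker]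
  rw [← sum_fiberwise univ φ, smul_sum]
  refine sum_congr rfl fun b _ => ?_
  rw [sum_congr rfl fun a ha => congrArg F (mem_filter.1 ha).2, sum_const, hfiber]

theorem MonoidHom.prod_surjective_of_coprime {A B C : Type*} [Group A] [Group B] [Group C]
    [Finite B] [Finite C] {φ : A →* B} {ψ : A →* C} (hφ : Surjective φ) (hψ : Surjective ψ)
    (hBC : Nat.Coprime (Nat.card B) (Nat.card C)) : Surjective (φ.prod ψ) := by
  set K := (φ.prod ψ).range
  have hB : Nat.card B ∣ Nat.card K := Subgroup.card_dvd_of_surjective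
    ((MonoidHom.fst B C).comp K.subtype) fun b => by
      obtain ⟨a, rfl⟩ := hφ b
      exact ⟨⟨_, a, rfl⟩, rfl⟩
  have hC : Nat.card C ∣ Nat.card K := Subgroup.card_dvd_of_surjective
    ((MonoidHom.snd B C).comp K.subtype) fun c => by
      obtain ⟨a, rfl⟩ := hψ c
      exact ⟨⟨_, a, rfl⟩, rfl⟩
  refine MonoidHom.range_eq_top.1 (Subgroup.eq_top_of_le_card _ ?_)
  rw [Nat.card_prod]
  exact Nat.le_of_dvd Nat.card_pos (hBC.mul_dvd_of_dvd_of_dvd hB hC)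

theorem exists_zmod_injective_of_prime_dvd_card {G : Type*} [Group G] [Finite G] {p : ℕ}
    [Fact p.Prime] (h : p ∣ Nat.card G) : ∃ φ : Multiplicative (ZMod p) →* G, Injective φ := by
  obtain ⟨g, hg⟩ := exists_prime_orderOf_dvd_card' p h
  have e := zmodCyclicMulEquiv (G := Subgroup.zpowers g) inferInstance
  rw [Nat.card_zpowers, hg] at e
  exact ⟨(Subgroup.zpowers g).subtype.comp e.toMonoidHom, Subtype.val_injective.comp e.injective⟩

theorem eq_zero_of_sum_lines_eq_zero {K R : Type*} [Field K] [Fintype K] [Field R] [CharZero R]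
    {F : K × K → R} (hline : ∀ j, ∑ t, F (t, j * t) = 0) (hvert : ∀ a, ∑ t, F (a, t) = 0) :
    F 0 = 0 := by
  have hrow : ∀ t ≠ 0, ∑ j, F (t, j * t) = 0 := fun t ht => by
    rw [← hvert t]
    exact Fintype.sum_equiv (Equiv.mulRight₀ t ht) _ _ fun _ => rfl
  have htotal : ∑ t, ∑ j, F (t, j * t) = Fintype.card K • F 0 := by
    rw [sum_eq_single 0 (fun t _ ht => hrow t ht) (by simp)]
    simp [Prod.zero_eq_mk]
  have hzero : ∑ t, ∑ j, F (t, j * t) = 0 := by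
    rw [sum_comm]
    exact sum_eq_zero fun j _ => hline j
  exact (smul_eq_zero.1 (htotal ▸ hzero)).resolve_left Fintype.card_ne_zero

section Radon

variable {G H : Type*} [Group G] [Group H]

theorem radonSum_eq_sum {n : ℕ} [NeZero n] (f : G → ℂ) (γ : Multiplicative (ZMod n) →* G)
    (x : G) : radonSum f γ x = ∑ a, f (x * γ a) :=
  Fintype.sum_equiv ofAdd _ _ fun _ => rfl

theorem RadonNull.comp_injective {f : G → ℂ} (hf : RadonNull G f) {φ : H →* G}
    (hφ : Injective φ) (y : G) : RadonNull H fun h => f (y * φ h) := by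
  intro n hn γ hγ x
  have hφγ : φ.comp γ ≠ 1 := fun h =>
    hγ <| MonoidHom.ext fun t => hφ <| by simpa using DFunLike.congr_fun h t
  simpa [radonSum, mul_assoc] using hf n hn (φ.comp γ) hφγ (y * φ x)

theorem RadonInjective.of_injective (hH : RadonInjective H) {φ : H →* G} (hφ : Injective φ) :
    RadonInjective G := fun f hf => funext fun y => by
  simpa using congrFun (hH _ (hf.comp_injective hφ y)) 1

theorem RadonNull.sum_range_eq_zero {f : G → ℂ} (hf : RadonNull G f) {n : ℕ} (hn : 2 ≤ n)
    {γ : Multiplicative (ZMod n) →* G} (hγ : γ ≠ 1) (x : G) [Fintype γ.range] :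
    ∑ h : γ.range, f (x * h) = 0 := by
  have : NeZero n := ⟨by omega⟩
  have hsum := γ.rangeRestrict.sum_comp_of_surjective γ.rangeRestrict_surjective fun h => f (x * h)
  simp only [MonoidHom.coe_rangeRestrict, MonoidHom.ker_rangeRestrict] at hsum
  have hker : (Nat.card γ.ker : ℂ) ≠ 0 := Nat.cast_ne_zero.2 Nat.card_pos.ne'
  rw [← smul_eq_zero_iff_right hker, Nat.cast_smul_eq_nsmul, ← hsum, ← radonSum_eq_sum]
  exact hf n hn γ hγ x

end Radon

theorem RadonNull.mul_prod {G₁ G₂ : Type*} [Group G₁] [Group G₂] [Finite G₁] [Finite G₂]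
    {f₁ : G₁ → ℂ} {f₂ : G₂ → ℂ} (h₁ : RadonNull G₁ f₁) (h₂ : RadonNull G₂ f₂)
    (hco : Nat.Coprime (Nat.card G₁) (Nat.card G₂)) :
    RadonNull (G₁ × G₂) fun x => f₁ x.1 * f₂ x.2 := by
  classical
  intro n hn γ hγ x
  have : NeZero n := ⟨by omega⟩
  set γ₁ := (MonoidHom.fst G₁ G₂).comp γ
  set γ₂ := (MonoidHom.snd G₁ G₂).comp γ
  set Φ := γ₁.rangeRestrict.prod γ₂.rangeRestrict
  have hsurj : Surjective Φ :=
    MonoidHom.prod_surjective_of_coprime γ₁.rangeRestrict_surjective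
      γ₂.rangeRestrict_surjective <|
      (hco.coprime_dvd_left (Subgroup.card_subgroup_dvd_card _)).coprime_dvd_right
        (Subgroup.card_subgroup_dvd_card _)
  have hfactor : radonSum (fun x => f₁ x.1 * f₂ x.2) γ x =
      Nat.card Φ.ker • ((∑ a : γ₁.range, f₁ (x.1 * a)) * ∑ b : γ₂.range, f₂ (x.2 * b)) := by
    rw [sum_mul_sum, ← Fintype.sum_prod_type', ← MonoidHom.sum_comp_of_surjective _ hsurj,
      radonSum_eq_sum]
    rfl
  have hγ₁₂ : γ₁ ≠ 1 ∨ γ₂ ≠ 1 := by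
    by_contra! h
    exact hγ <| MonoidHom.ext fun t =>
      Prod.ext (DFunLike.congr_fun h.1 t) (DFunLike.congr_fun h.2 t)
  rw [hfactor]
  rcases hγ₁₂ with h | h
  · rw [h₁.sum_range_eq_zero hn h, zero_mul, smul_zero]
  · rw [h₂.sum_range_eq_zero hn h, mul_zero, smul_zero]

theorem radonInjective_zmod_prod (p : ℕ) [Fact p.Prime] :
    RadonInjective (Multiplicative (ZMod p) × Multiplicative (ZMod p)) := by
  intro f hf
  funext x
  have hp : 2 ≤ p := (Fact.out : p.Prime).two_le
  have hline (j : ZMod p) : ∑ t : ZMod p, f (x * (ofAdd t, ofAdd (j * t))) = 0 := by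
    have hγ : (MonoidHom.id _).prod (AddMonoidHom.mulLeft j).toMultiplicative ≠ 1 := fun h => by
      simpa using congrArg Prod.fst (DFunLike.congr_fun h (ofAdd 1))
    simpa [radonSum] using hf p hp _ hγ x
  have hvert (a : ZMod p) : ∑ t : ZMod p, f (x * (ofAdd a, ofAdd t)) = 0 := by
    have hγ : MonoidHom.inr (Multiplicative (ZMod p)) (Multiplicative (ZMod p)) ≠ 1 := fun h => by
      simpa using congrArg Prod.snd (DFunLike.congr_fun h (ofAdd 1))
    rw [← hf p hp _ hγ (x * (ofAdd a, 1))]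
    simp only [radonSum, MonoidHom.inr_apply, mul_assoc, Prod.mk_mul_mk, mul_one, one_mul]
  simpa [Prod.mk_one_one] using
    eq_zero_of_sum_lines_eq_zero (F := fun v => f (x * (ofAdd v.1, ofAdd v.2))) hline hvert

theorem radonInjective_prod_of_not_coprime {G₁ G₂ : Type*} [Group G₁] [Group G₂] [Finite G₁]
    [Finite G₂] (h : ¬ Nat.Coprime (Nat.card G₁) (Nat.card G₂)) : RadonInjective (G₁ × G₂) := by
  obtain ⟨p, hp, hp₁, hp₂⟩ := Nat.Prime.not_coprime_iff_dvd.1 h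
  have := Fact.mk hp
  obtain ⟨φ₁, hφ₁⟩ := exists_zmod_injective_of_prime_dvd_card hp₁
  obtain ⟨φ₂, hφ₂⟩ := exists_zmod_injective_of_prime_dvd_card hp₂
  exact (radonInjective_zmod_prod p).of_injective (φ := φ₁.prodMap φ₂) (hφ₁.prodMap hφ₂)

theorem radon_product (G₁ G₂ : Type*) [Group G₁] [Group G₂] [Fintype G₁] [Fintype G₂] :
    ¬ RadonInjective (G₁ × G₂) ↔
      ¬ RadonInjective G₁ ∧ ¬ RadonInjective G₂ ∧
        Nat.Coprime (Fintype.card G₁) (Fintype.card G₂) := by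
  simp only [← Nat.card_eq_fintype_card]
  constructor
  · intro h
    refine ⟨fun h₁ => h ?_, fun h₂ => h ?_,
      of_not_not fun hco => h (radonInjective_prod_of_not_coprime hco)⟩
    · exact h₁.of_injective (φ := MonoidHom.inl G₁ G₂) (Prod.mk_left_injective 1)
    · exact h₂.of_injective (φ := MonoidHom.inr G₁ G₂) (Prod.mk_right_injective 1)
  · rintro ⟨h₁, h₂, hco⟩
    simp only [RadonInjective, not_forall] at h₁ h₂ ⊢
    obtain ⟨f₁, hf₁, hne₁⟩ := h₁
    obtain ⟨f₂, hf₂, hne₂⟩ := h₂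
    obtain ⟨x₁, hx₁⟩ := Function.ne_iff.1 hne₁
    obtain ⟨x₂, hx₂⟩ := Function.ne_iff.1 hne₂
    exact ⟨_, hf₁.mul_prod hf₂ hco, fun h => mul_ne_zero hx₁ hx₂ (congrFun h (x₁, x₂))⟩
end

section
/- For every integer n ≥ 3, the Radon transform is injective on the dihedral group of order 2n (Mathlib's DihedralGroup n). -/
/-!
Every reflection `s` of the dihedral group is an involution, so the Radon transform along the
geodesic `{x, x * s}` gives `f x = -f (x * s)`. As every rotation is a product of two reflections,
`f` takes a single value `c` on rotations and `-c` on reflections; the geodesic through the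
rotation subgroup then gives `n * c = 0`.
-/

open Finset

section ZModPowHom

variable {G : Type*} [Group G]

def zmodPowHom (m : ℕ) [NeZero m] {g : G} (hg : g ^ m = 1) : Multiplicative (ZMod m) →* G where
  toFun t := g ^ t.toAdd.val
  map_one' := by simp
  map_mul' a b := by simp only [toAdd_mul, ZMod.val_add, ← pow_eq_pow_mod _ hg, pow_add]

@[simp]
lemma zmodPowHom_apply (m : ℕ) [NeZero m] {g : G} (hg : g ^ m = 1) (t : Multiplicative (ZMod m)) :
    zmodPowHom m hg t = g ^ t.toAdd.val :=
  rfl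

lemma zmodPowHom_ne_one {m : ℕ} [NeZero m] (hm : 2 ≤ m) {g : G} (hg : g ^ m = 1) (hg1 : g ≠ 1) :
    zmodPowHom m hg ≠ 1 := fun h ↦ hg1 <| by
  simpa [ZMod.val_one_eq_one_mod, Nat.mod_eq_of_lt hm] using DFunLike.congr_fun h (.ofAdd 1)

end ZModPowHom

namespace RadonNull

variable {G : Type*} [Group G] {f : G → ℂ}

theorem sum_range_mul_pow (hf : RadonNull G f) {m : ℕ} (hm : 2 ≤ m) {g : G} (hg : g ^ m = 1)
    (hg1 : g ≠ 1) (x : G) : ∑ k ∈ range m, f (x * g ^ k) = 0 := by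
  obtain ⟨m, rfl⟩ : ∃ k, m = k + 1 := ⟨m - 1, by omega⟩
  rw [← Fin.sum_univ_eq_sum_range]
  -- `ZMod (m + 1)` is `Fin (m + 1)` by definition, with `ZMod.val = Fin.val`
  exact hf _ hm _ (zmodPowHom_ne_one hm hg hg1) x

theorem add_apply_mul_eq_zero (hf : RadonNull G f) {s : G} (hs : s ^ 2 = 1) (hs1 : s ≠ 1)
    (x : G) : f x + f (x * s) = 0 := by
  simpa [sum_range_succ] using hf.sum_range_mul_pow le_rfl hs hs1 x

end RadonNull

namespace DihedralGroup

variable {n : ℕ} {f : DihedralGroup n → ℂ}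

lemma sr_ne_one (i : ZMod n) : sr i ≠ 1 := by
  rw [one_def]
  exact nofun

lemma r_one_ne_one (hn : 2 ≤ n) : (r 1 : DihedralGroup n) ≠ 1 := fun h ↦ by
  have := orderOf_r_one (n := n)
  rw [h, orderOf_one] at this
  omega

lemma apply_sr_eq_neg_apply_r (hf : RadonNull (DihedralGroup n) f) (i j : ZMod n) :
    f (sr i) = -f (r j) := by
  have h := hf.add_apply_mul_eq_zero (by rw [sq, sr_mul_self]) (sr_ne_one (j + i)) (sr i)
  rw [sr_mul_sr, add_sub_cancel_right] at h
  exact eq_neg_of_add_eq_zero_left h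

lemma apply_r_eq_apply_one (hf : RadonNull (DihedralGroup n) f) (j : ZMod n) :
    f (r j) = f 1 :=
  neg_injective <| (apply_sr_eq_neg_apply_r hf 0 j).symm.trans (apply_sr_eq_neg_apply_r hf 0 0)

lemma apply_one_eq_zero (hf : RadonNull (DihedralGroup n) f) (hn : 2 ≤ n) : f 1 = 0 := by
  have hsum := hf.sum_range_mul_pow hn r_one_pow_n (r_one_ne_one hn) 1
  simp only [one_mul, r_one_pow, apply_r_eq_apply_one hf, sum_const, card_range,
    nsmul_eq_mul] at hsum
  exact (mul_eq_zero.mp hsum).resolve_left (Nat.cast_ne_zero.mpr (by omega))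

end DihedralGroup

open DihedralGroup in
theorem radon_injective_dihedral (n : ℕ) (hn : 3 ≤ n) :
    RadonInjective (DihedralGroup n) := by
  intro f hf
  have hf1 := apply_one_eq_zero hf (by omega)
  funext g
  cases g with
  | r j => rw [apply_r_eq_apply_one hf, hf1, Pi.zero_apply]
  | sr i => rw [apply_sr_eq_neg_apply_r hf i 0, ← one_def, hf1, neg_zero, Pi.zero_apply]
end

section
/- For every natural number n, the Radon transform is injective on the symmetric group S_n (the group Equiv.Perm (Fin n)) if and only if n ≥ 3. -/
def cyc {G : Type*} [Group G] {n : ℕ} [NeZero n] (g : G) (hg : g ^ n = 1) :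
    Multiplicative (ZMod n) →* G where
  toFun t := g ^ (Multiplicative.toAdd t).val
  map_one' := by simp
  map_mul' a b := by
    show g ^ ((Multiplicative.toAdd a + Multiplicative.toAdd b).val) = _
    rw [ZMod.val_add, ← pow_eq_pow_mod _ hg, pow_add]

lemma cyc_apply {G : Type*} [Group G] {n : ℕ} [NeZero n] (g : G) (hg : g ^ n = 1) (t : ZMod n) :
    cyc g hg (Multiplicative.ofAdd t) = g ^ t.val := rfl

lemma cyc_ne_one {G : Type*} [Group G] {n : ℕ} [NeZero n] (hn : 1 < n) (g : G) (hg : g ^ n = 1)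
    (h1 : g ≠ 1) : cyc g hg ≠ 1 := by
  intro h
  apply h1
  have := congrArg (fun φ => φ (Multiplicative.ofAdd (1 : ZMod n))) h
  simpa [cyc_apply, ZMod.val_one_eq_one_mod, Nat.mod_eq_of_lt hn] using this

lemma radonSum_cyc {G : Type*} [Group G] {n : ℕ} [NeZero n] (f : G → ℂ) (g : G) (hg : g ^ n = 1)
    (x : G) : radonSum f (cyc g hg) x = ∑ k ∈ Finset.range n, f (x * g ^ k) := by
  unfold radonSum
  refine Finset.sum_nbij' (fun t => t.val) (fun k => (k : ZMod n)) ?_ ?_ ?_ ?_ ?_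
  · intro t _; exact Finset.mem_range.mpr (ZMod.val_lt t)
  · intro k _; exact Finset.mem_univ _
  · intro t _; exact ZMod.natCast_rightInverse t
  · intro k hk; exact ZMod.val_cast_of_lt (Finset.mem_range.mp hk)
  · intro t _; rw [cyc_apply]

lemma hom_eq_pow {G : Type*} [Group G] {m : ℕ} [NeZero m] (γ : Multiplicative (ZMod m) →* G)
    (t : ZMod m) : γ (Multiplicative.ofAdd t) = (γ (Multiplicative.ofAdd 1)) ^ t.val := by
  conv_lhs => rw [← ZMod.natCast_rightInverse t]
  rw [show ((t.val : ZMod m)) = t.val • (1 : ZMod m) by simp, ofAdd_nsmul, map_pow]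

theorem radon_injective_symmetric (n : ℕ) :
    RadonInjective (Equiv.Perm (Fin n)) ↔ 3 ≤ n := by
  constructor
  · intro h
    by_contra hn
    push_neg at hn
    interval_cases n
    · have htriv : ∀ g : Equiv.Perm (Fin 0), g = 1 := by decide
      have hnull : RadonNull (Equiv.Perm (Fin 0)) (fun _ => 1) := by
        intro m hm γ hγ x
        exact absurd (MonoidHom.ext fun t => htriv (γ t)) hγ
      have := congrFun (h (fun _ => 1) hnull) 1
      simpa using this
    · have htriv : ∀ g : Equiv.Perm (Fin 1), g = 1 := by decide
      have hnull : RadonNull (Equiv.Perm (Fin 1)) (fun _ => 1) := by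
        intro m hm γ hγ x
        exact absurd (MonoidHom.ext fun t => htriv (γ t)) hγ
      have := congrFun (h (fun _ => 1) hnull) 1
      simpa using this
    · set f : Equiv.Perm (Fin 2) → ℂ := fun p => ((Equiv.Perm.sign p : ℤ) : ℂ) with hf
      have hnull : RadonNull (Equiv.Perm (Fin 2)) f := by
        intro m hm γ hγ x
        haveI : NeZero m := ⟨by omega⟩
        have key : ∀ g : Equiv.Perm (Fin 2), g ≠ 1 → Equiv.Perm.sign g = -1 ∧ g ^ 2 = 1 := by
          decide
        set g := γ (Multiplicative.ofAdd 1) with hgdef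
        have hg1 : g ≠ 1 := by
          intro hg
          apply hγ
          refine MonoidHom.ext fun t => ?_
          rw [← ofAdd_toAdd t, hom_eq_pow, ← hgdef, hg, one_pow, MonoidHom.one_apply]
        have hgm : g ^ m = 1 := by
          rw [← map_pow, ← ofAdd_nsmul]
          simp
        have hγcyc : γ = cyc g hgm := by
          refine MonoidHom.ext fun t => ?_
          rw [← ofAdd_toAdd t, hom_eq_pow, cyc_apply]
        obtain ⟨hsg, hg2⟩ := key g hg1
        have hmeven : Even m := by
          rcases Nat.even_or_odd m with he | ho
          · exact he
          · exfalso
            obtain ⟨k, hk⟩ := ho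
            rw [hk, pow_add, pow_mul, hg2, one_pow, one_mul, pow_one] at hgm
            exact hg1 hgm
        rw [hγcyc, radonSum_cyc]
        have hterm : ∀ k, f (x * g ^ k) = f x * (-1) ^ k := by
          intro k
          simp only [hf, map_mul, map_pow, hsg]
          push_cast
          ring
        rw [Finset.sum_congr rfl fun k _ => hterm k, ← Finset.mul_sum,
          geom_sum_eq (by norm_num : (-1 : ℂ) ≠ 1), hmeven.neg_one_pow]
        simp
      have := congrFun (h f hnull) 1
      simp [hf] at this
  · intro hn f hf
    funext x
    have hswap : ∀ a b : Fin n, a ≠ b → ∀ y : Equiv.Perm (Fin n),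
        f (y * Equiv.swap a b) = - f y := by
      intro a b hab y
      have hg : (Equiv.swap a b) ^ 2 = 1 := by rw [sq, Equiv.swap_mul_self]
      have hne : Equiv.swap a b ≠ 1 := by
        intro hcon
        exact hab (Equiv.swap_eq_one_iff.mp hcon)
      have := hf 2 le_rfl (cyc _ hg) (cyc_ne_one one_lt_two _ hg hne) y
      rw [radonSum_cyc, Finset.sum_range_succ, Finset.sum_range_one, pow_zero, mul_one,
        pow_one] at this
      linear_combination this
    set a : Fin n := ⟨0, by omega⟩
    set b : Fin n := ⟨1, by omega⟩
    set c : Fin n := ⟨2, by omega⟩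
    have hab : a ≠ b := by simp [a, b, Fin.ext_iff]
    have hac : a ≠ c := by simp [a, c, Fin.ext_iff]
    have hbc : b ≠ c := by simp [b, c, Fin.ext_iff]
    set σ : Equiv.Perm (Fin n) := Equiv.swap a b * Equiv.swap a c with hσdef
    have h3c : σ.IsThreeCycle := Equiv.Perm.isThreeCycle_swap_mul_swap_same hab hac hbc
    have horder : orderOf σ = 3 := h3c.orderOf
    have hσ3 : σ ^ 3 = 1 := by rw [← horder]; exact pow_orderOf_eq_one σ
    have hσ1 : σ ≠ 1 := by
      intro hcon
      rw [hcon, orderOf_one] at horder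
      omega
    have hσ2 : σ ^ 2 = Equiv.swap a c * Equiv.swap a b := by
      have hinv : σ ^ 2 = σ⁻¹ :=
        eq_inv_of_mul_eq_one_left (by rw [← pow_succ]; exact hσ3)
      rw [hinv, hσdef, mul_inv_rev, Equiv.swap_inv, Equiv.swap_inv]
    have h3 := hf 3 (by norm_num) (cyc σ hσ3) (cyc_ne_one (by norm_num) σ hσ3 hσ1) x
    rw [radonSum_cyc, Finset.sum_range_succ, Finset.sum_range_succ, Finset.sum_range_one,
      pow_zero, mul_one, pow_one] at h3
    have e1 : f (x * σ) = f x := by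
      rw [hσdef, ← mul_assoc, hswap a c hac, hswap a b hab, neg_neg]
    have e2 : f (x * σ ^ 2) = f x := by
      rw [hσ2, ← mul_assoc, hswap a b hab, hswap a c hac, neg_neg]
    rw [e1, e2] at h3
    have : (3 : ℂ) * f x = 0 := by linear_combination h3
    simpa using this
end

section
/- For every natural number n, the Radon transform is injective on the alternating group A_n (the subgroup of even permutations of Fin n) if and only if n ≥ 4. -/
open Multiplicative Equiv

/-- If a group admits an injective character into `ℂˣ`, the Radon transform is not injective. -/
lemma aux_not_radonInjective {G : Type*} [Group G] (χ : G →* ℂˣ)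
    (hinj : Function.Injective χ) : ¬ RadonInjective G := by
  intro h
  have h0 : RadonNull G (fun g => ((χ g : ℂˣ) : ℂ)) := by
    intro m hm γ hγ x
    haveI : NeZero m := ⟨by omega⟩
    show (∑ t : ZMod m, ((χ (x * γ (ofAdd t)) : ℂˣ) : ℂ)) = 0
    obtain ⟨t, ht⟩ : ∃ t, γ t ≠ 1 := by
      by_contra hc; push_neg at hc; exact hγ (MonoidHom.ext hc)
    set c : ℂ := ((χ (γ t) : ℂˣ) : ℂ) with hc
    have hcne : c ≠ 1 := by
      intro hh
      exact ht (hinj (by rw [map_one]; exact Units.ext hh))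
    have key : (∑ s : ZMod m, ((χ (γ (ofAdd s)) : ℂˣ) : ℂ))
        = (∑ s : ZMod m, ((χ (γ (ofAdd s)) : ℂˣ) : ℂ)) * c := by
      have e1 : ∑ s : ZMod m, ((χ (γ (ofAdd (s + t.toAdd))) : ℂˣ) : ℂ)
          = ∑ s : ZMod m, ((χ (γ (ofAdd s)) : ℂˣ) : ℂ) :=
        Fintype.sum_equiv (Equiv.addRight t.toAdd) _ _ (fun s => rfl)
      have e2 : ∀ s : ZMod m, ((χ (γ (ofAdd (s + t.toAdd))) : ℂˣ) : ℂ)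
          = ((χ (γ (ofAdd s)) : ℂˣ) : ℂ) * c := by
        intro s
        have : ofAdd (s + t.toAdd) = ofAdd s * t := by
          rw [ofAdd_add]; simp
        rw [this, map_mul, map_mul, Units.val_mul]
      conv_lhs => rw [← e1]
      rw [Finset.sum_congr rfl (fun s _ => e2 s), ← Finset.sum_mul]
    set S : ℂ := ∑ s : ZMod m, ((χ (γ (ofAdd s)) : ℂˣ) : ℂ) with hS
    have hS0 : S = 0 := by
      have : S * (c - 1) = 0 := by ring_nf; linear_combination -key
      rcases mul_eq_zero.mp this with h' | h'
      · exact h'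
      · exact absurd (sub_eq_zero.mp h') hcne
    calc ∑ s : ZMod m, ((χ (x * γ (ofAdd s)) : ℂˣ) : ℂ)
        = ∑ s : ZMod m, ((χ x : ℂˣ) : ℂ) * ((χ (γ (ofAdd s)) : ℂˣ) : ℂ) := by
          refine Finset.sum_congr rfl fun s _ => ?_
          rw [map_mul, Units.val_mul]
      _ = ((χ x : ℂˣ) : ℂ) * S := by rw [← Finset.mul_sum]
      _ = 0 := by rw [hS0, mul_zero]
  have := congrFun (h (fun g => ((χ g : ℂˣ) : ℂ)) h0) 1
  simp at this

/-- homomorphism from C2 sending the generator to an involution -/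
def invHom {G : Type*} [Group G] (g : G) (h : g * g = 1) : Multiplicative (ZMod 2) →* G where
  toFun t := g ^ (t.toAdd.val)
  map_one' := by
    show g ^ ((0 : ZMod 2).val) = 1
    rw [ZMod.val_zero, pow_zero]
  map_mul' s t := by
    show g ^ ((s.toAdd + t.toAdd).val) = g ^ (s.toAdd.val) * g ^ (t.toAdd.val)
    have h2 : g ^ 2 = 1 := by rw [pow_two, h]
    rw [ZMod.val_add, ← pow_eq_pow_mod _ h2, pow_add]

lemma invHom_ne_one {G : Type*} [Group G] (g : G) (h : g * g = 1) (hg : g ≠ 1) :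
    invHom g h ≠ 1 := by
  intro hh
  apply hg
  have := congrFun (congrArg (fun φ : Multiplicative (ZMod 2) →* G =>
    (φ : Multiplicative (ZMod 2) → G)) hh) (ofAdd 1)
  simpa [invHom, ZMod.val_one] using this

lemma sum_invHom {G : Type*} [Group G] (g : G) (h : g * g = 1) (f : G → ℂ) (x : G) :
    ∑ t : ZMod 2, f (x * invHom g h (ofAdd t)) = f x + f (x * g) := by
  have huniv : (Finset.univ : Finset (ZMod 2)) = {0, 1} := by decide
  rw [huniv, Finset.sum_insert (by decide), Finset.sum_singleton]
  show f (x * g ^ ((0 : ZMod 2).val)) + f (x * g ^ ((1 : ZMod 2).val)) = _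
  rw [ZMod.val_zero, ZMod.val_one, pow_zero, pow_one, mul_one]

lemma sq_swap_mul_swap {α : Type*} [DecidableEq α] {p q r s : α}
    (hpr : p ≠ r) (hps : p ≠ s) (hqr : q ≠ r) (hqs : q ≠ s) :
    (swap p q * swap r s) * (swap p q * swap r s) = 1 := by
  have hd : (swap p q).Disjoint (swap r s) := by
    intro x
    by_cases hxp : x = p
    · exact Or.inr (by subst hxp; exact swap_apply_of_ne_of_ne hpr hps)
    by_cases hxq : x = q
    · exact Or.inr (by subst hxq; exact swap_apply_of_ne_of_ne hqr hqs)
    exact Or.inl (swap_apply_of_ne_of_ne hxp hxq)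
  have hc : Commute (swap r s) (swap p q) := hd.commute.symm
  rw [hc.mul_mul_mul_comm, swap_mul_self, swap_mul_self, mul_one]

lemma swap_klein {α : Type*} [DecidableEq α] {p q r s : α}
    (hpq : p ≠ q) (hpr : p ≠ r) (hps : p ≠ s) (hqr : q ≠ r) (hqs : q ≠ s) (hrs : r ≠ s) :
    (swap p q * swap r s) * (swap p r * swap q s) = swap p s * swap q r := by
  ext x
  simp only [Equiv.Perm.mul_apply]
  by_cases hxp : x = p
  · subst hxp
    rw [swap_apply_of_ne_of_ne hpq hps, swap_apply_left,
      swap_apply_left, swap_apply_of_ne_of_ne hps.symm hqs.symm,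
      swap_apply_of_ne_of_ne hpq hpr, swap_apply_left]
  by_cases hxq : x = q
  · subst hxq
    rw [swap_apply_left, swap_apply_of_ne_of_ne hps.symm hrs.symm,
      swap_apply_right, swap_apply_of_ne_of_ne hpr.symm hqr.symm,
      swap_apply_left, swap_apply_of_ne_of_ne hpr.symm hrs]
  by_cases hxr : x = r
  · subst hxr
    rw [swap_apply_of_ne_of_ne hqr.symm hrs, swap_apply_right,
      swap_apply_of_ne_of_ne hpr hps, swap_apply_left,
      swap_apply_right, swap_apply_of_ne_of_ne hpq.symm hqs]
  by_cases hxs : x = s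
  · subst hxs
    rw [swap_apply_right, swap_apply_of_ne_of_ne hpq.symm hqr,
      swap_apply_of_ne_of_ne hqr hqs, swap_apply_right,
      swap_apply_of_ne_of_ne hqs.symm hrs.symm, swap_apply_right]
  rw [swap_apply_of_ne_of_ne hxq hxs, swap_apply_of_ne_of_ne hxp hxr,
    swap_apply_of_ne_of_ne hxr hxs, swap_apply_of_ne_of_ne hxp hxq,
    swap_apply_of_ne_of_ne hxq hxr, swap_apply_of_ne_of_ne hxp hxs]

lemma a3_char : ∃ χ : alternatingGroup (Fin 3) →* ℂˣ, Function.Injective χ := by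
  have hcard : Nat.card (alternatingGroup (Fin 3)) = 3 := by
    have h2 := two_mul_card_alternatingGroup (α := Fin 3)
    rw [Fintype.card_perm, Fintype.card_fin] at h2
    have h6 : Nat.factorial 3 = 6 := by decide
    rw [Nat.card_eq_fintype_card]
    omega
  haveI : Fact (Nat.Prime 3) := ⟨by norm_num⟩
  haveI hcyc : IsCyclic (alternatingGroup (Fin 3)) := isCyclic_of_prime_card hcard
  letI : CommGroup (alternatingGroup (Fin 3)) := IsCyclic.commGroup
  haveI : Nontrivial (alternatingGroup (Fin 3)) :=
    alternatingGroup.nontrivial_of_three_le_card (by simp)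
  obtain ⟨a, ha⟩ := exists_ne (1 : alternatingGroup (Fin 3))
  have hprim : ∃ ζ : ℂˣ, IsPrimitiveRoot ζ (Nat.card (alternatingGroup (Fin 3))) := by
    rw [hcard]
    have h3 := Complex.isPrimitiveRoot_exp 3 (by norm_num)
    exact ⟨_, h3.isUnit_unit (by norm_num)⟩
  obtain ⟨χ, hχ⟩ := IsCyclic.exists_apply_ne_one hprim ha
  refine ⟨χ, ?_⟩
  rw [← MonoidHom.ker_eq_bot_iff]
  rw [Subgroup.eq_bot_iff_forall]
  intro h hh
  by_contra hne
  have hord : orderOf h = 3 := by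
    have hdvd : orderOf h ∣ 3 := by
      have hd := orderOf_dvd_natCard h; rwa [hcard] at hd
    rcases (Nat.Prime.eq_one_or_self_of_dvd (by norm_num) _ hdvd) with h1 | h1
    · exact absurd (orderOf_eq_one_iff.mp h1) hne
    · exact h1
  have htop : Subgroup.zpowers h = ⊤ := by
    apply Subgroup.eq_top_of_card_eq
    rw [Nat.card_zpowers, hord, hcard]
  have hmem : a ∈ Subgroup.zpowers h := htop ▸ Subgroup.mem_top a
  obtain ⟨k, hk⟩ := hmem
  simp only [MonoidHom.mem_ker] at hh
  apply hχ
  rw [← hk, map_zpow, hh, one_zpow]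

set_option maxHeartbeats 1000000 in
theorem radon_injective_alternating (n : ℕ) :
    RadonInjective (alternatingGroup (Fin n)) ↔ 4 ≤ n := by
  constructor
  · intro h
    by_contra hlt
    push_neg at hlt
    interval_cases n
    · have hall : ∀ x : alternatingGroup (Fin 0), x = 1 := by decide
      exact aux_not_radonInjective (1 : alternatingGroup (Fin 0) →* ℂˣ)
        (fun a b _ => (hall a).trans (hall b).symm) h
    · have hall : ∀ x : alternatingGroup (Fin 1), x = 1 := by decide
      exact aux_not_radonInjective (1 : alternatingGroup (Fin 1) →* ℂˣ)
        (fun a b _ => (hall a).trans (hall b).symm) h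
    · have hall : ∀ x : alternatingGroup (Fin 2), x = 1 := by decide
      exact aux_not_radonInjective (1 : alternatingGroup (Fin 2) →* ℂˣ)
        (fun a b _ => (hall a).trans (hall b).symm) h
    · obtain ⟨χ, hχ⟩ := a3_char
      exact aux_not_radonInjective χ hχ h
  · intro hn f hf
    funext x
    show f x = 0
    set p : Fin n := ⟨0, by omega⟩ with hp
    set q : Fin n := ⟨1, by omega⟩ with hq
    set r : Fin n := ⟨2, by omega⟩ with hr
    set s : Fin n := ⟨3, by omega⟩ with hs
    have hpq : p ≠ q := by rw [hp, hq, Ne, Fin.mk.injEq]; omega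
    have hpr : p ≠ r := by rw [hp, hr, Ne, Fin.mk.injEq]; omega
    have hps : p ≠ s := by rw [hp, hs, Ne, Fin.mk.injEq]; omega
    have hqr : q ≠ r := by rw [hq, hr, Ne, Fin.mk.injEq]; omega
    have hqs : q ≠ s := by rw [hq, hs, Ne, Fin.mk.injEq]; omega
    have hrs : r ≠ s := by rw [hr, hs, Ne, Fin.mk.injEq]; omega
    have ha : swap p q * swap r s ∈ alternatingGroup (Fin n) := by
      rw [Equiv.Perm.mem_alternatingGroup, map_mul,
        Equiv.Perm.sign_swap hpq, Equiv.Perm.sign_swap hrs]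
      simp
    have hb : swap p r * swap q s ∈ alternatingGroup (Fin n) := by
      rw [Equiv.Perm.mem_alternatingGroup, map_mul,
        Equiv.Perm.sign_swap hpr, Equiv.Perm.sign_swap hqs]
      simp
    set A : alternatingGroup (Fin n) := ⟨swap p q * swap r s, ha⟩ with hA
    set B : alternatingGroup (Fin n) := ⟨swap p r * swap q s, hb⟩ with hB
    have hA2 : A * A = 1 := Subtype.ext (sq_swap_mul_swap hpr hps hqr hqs)
    have hB2 : B * B = 1 := Subtype.ext (sq_swap_mul_swap hpq hps hqr.symm hrs)
    have hABval : ((A * B : alternatingGroup (Fin n)) : Equiv.Perm (Fin n))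
        = swap p s * swap q r := swap_klein hpq hpr hps hqr hqs hrs
    have hAB2 : (A * B) * (A * B) = 1 := by
      apply Subtype.ext
      have : ((A * B) * (A * B) : alternatingGroup (Fin n)).val
          = (swap p s * swap q r) * (swap p s * swap q r) := by
        rw [Subgroup.coe_mul, hABval]
      rw [this]
      exact sq_swap_mul_swap hpq hpr hqs.symm hrs.symm
    have hA1 : A ≠ 1 := by
      intro hh
      have h1 : (swap p q * swap r s : Equiv.Perm (Fin n)) = 1 :=
        congrArg Subtype.val hh
      have h2 : (swap p q * swap r s) p = q := by
        rw [Equiv.Perm.mul_apply, swap_apply_of_ne_of_ne hpr hps, swap_apply_left]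
      rw [h1] at h2
      exact hpq h2
    have hB1 : B ≠ 1 := by
      intro hh
      have h1 : (swap p r * swap q s : Equiv.Perm (Fin n)) = 1 :=
        congrArg Subtype.val hh
      have h2 : (swap p r * swap q s) p = r := by
        rw [Equiv.Perm.mul_apply, swap_apply_of_ne_of_ne hpq hps, swap_apply_left]
      rw [h1] at h2
      exact hpr h2
    have hAB1 : A * B ≠ 1 := by
      intro hh
      have h1 : (swap p s * swap q r : Equiv.Perm (Fin n)) = 1 := by
        rw [← hABval]; exact congrArg Subtype.val hh
      have h2 : (swap p s * swap q r) p = s := by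
        rw [Equiv.Perm.mul_apply, swap_apply_of_ne_of_ne hpq hpr, swap_apply_left]
      rw [h1] at h2
      exact hps h2
    have key : ∀ g : alternatingGroup (Fin n), g * g = 1 → g ≠ 1 →
        ∀ y : alternatingGroup (Fin n), f y + f (y * g) = 0 := by
      intro g hg2 hg1 y
      have h0 := hf 2 le_rfl (invHom g hg2) (invHom_ne_one g hg2 hg1) y
      rw [← sum_invHom g hg2 f y]
      exact h0
    have e1 := key A hA2 hA1 x
    have e2 := key B hB2 hB1 (x * A)
    have e3 := key (A * B) hAB2 hAB1 x
    rw [← mul_assoc] at e3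
    have h2 : (2 : ℂ) * f x = 0 := by linear_combination e1 - e2 + e3
    exact (mul_eq_zero.mp h2).resolve_left two_ne_zero
end

section
/- For every integer n ≥ 2, the Radon transform is not injective on the dicyclic group Dic_n of order 4n (Mathlib's QuaternionGroup n, generated by a, b with a^{2n} = e, b² = aⁿ, and a b = b a⁻¹): there exists a nonzero f : Dic_n → ℂ all of whose Radon transforms vanish. -/
/-!
Let `ζ` be a primitive `2n`-th root of unity and let `f` be the character `a i ↦ ζ ^ i` of the
cyclic subgroup `⟨a⟩`, extended by zero to the rest of the group. Right translation by `a i`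
multiplies `f` by `ζ ^ i`. Every nontrivial element `g` has a power `a j` with `j ≠ 0` (for
`g = xa i` take `g ^ 2 = a n`), so each coset of a nontrivial cyclic subgroup is invariant under
a translation that scales `f` by a factor `≠ 1`, and the sum of `f` over the coset vanishes.
-/

theorem radonSum_eq_zero_of_mul_right_eq_const_mul {G : Type*} [Group G] {m : ℕ} [NeZero m]
    {f : G → ℂ} {γ : Multiplicative (ZMod m) →* G} {c : Multiplicative (ZMod m)} {α : ℂ}
    (hα : α ≠ 1) (hf : ∀ y, f (y * γ c) = α * f y) (x : G) : radonSum f γ x = 0 := by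
  have hinv : α * radonSum f γ x = radonSum f γ x :=
    calc α * radonSum f γ x
        = ∑ t : ZMod m, f (x * γ (Multiplicative.ofAdd t) * γ c) := by
          simp only [radonSum, Finset.mul_sum, hf]
      _ = radonSum f γ x :=
          Fintype.sum_equiv (Equiv.addRight (Multiplicative.toAdd c)) _ _
            fun t => by simp [mul_assoc]
  exact (mul_left_eq_self₀.mp hinv).resolve_left hα

namespace QuaternionGroup

variable {n : ℕ}

theorem exists_pow_eq_a_ne_zero [NeZero n] {g : QuaternionGroup n} (hg : g ≠ 1) :
    ∃ (k : ℕ) (j : ZMod (2 * n)), j ≠ 0 ∧ g ^ k = a j := by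
  cases g with
  | a i => exact ⟨1, i, fun hi => hg (by rw [hi, a_zero]), pow_one _⟩
  | xa i =>
    refine ⟨2, n, ?_, xa_sq i⟩
    rw [Ne, ZMod.natCast_eq_zero_iff]
    exact fun h => NeZero.ne n (Nat.eq_zero_of_dvd_of_lt h (by have := NeZero.pos n; omega))

variable {R : Type*} [CommMonoidWithZero R]

def charOnA (ζ : R) : QuaternionGroup n → R
  | .a i => ζ ^ i.val
  | .xa _ => 0

theorem charOnA_mul_a [NeZero n] {ζ : R} (hζ : ζ ^ (2 * n) = 1) (y : QuaternionGroup n)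
    (i : ZMod (2 * n)) : charOnA ζ (y * a i) = ζ ^ i.val * charOnA ζ y := by
  cases y with
  | a j =>
    rw [a_mul_a, charOnA, charOnA, ZMod.val_add, ← pow_eq_pow_mod _ hζ, pow_add, mul_comm]
  | xa j => rw [xa_mul_a, charOnA, charOnA, mul_zero]

end QuaternionGroup

theorem radon_not_injective_dicyclic (n : ℕ) (hn : 2 ≤ n) :
    ∃ f : QuaternionGroup n → ℂ, f ≠ 0 ∧ RadonNull (QuaternionGroup n) f := by
  have : NeZero n := ⟨by omega⟩
  have hζ := Complex.isPrimitiveRoot_exp (2 * n) (by omega)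
  refine ⟨QuaternionGroup.charOnA (Complex.exp (2 * Real.pi * Complex.I / (2 * n : ℕ))),
    fun h => by simpa [QuaternionGroup.charOnA] using congrFun h (.a 0), ?_⟩
  intro m hm γ hγ x
  have : NeZero m := ⟨by omega⟩
  obtain ⟨t, ht⟩ := DFunLike.ne_iff.mp hγ
  obtain ⟨k, j, hj, hpow⟩ := QuaternionGroup.exists_pow_eq_a_ne_zero ht
  refine radonSum_eq_zero_of_mul_right_eq_const_mul (c := t ^ k)
    (hζ.pow_ne_one_of_pos_of_lt (ZMod.val_pos.mpr hj).ne' j.val_lt) (fun y => ?_) x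
  rw [map_pow, hpow, QuaternionGroup.charOnA_mul_a hζ.pow_eq_one]
end

section
/- Let G be a finite group and let S be the (finite) set of all subgroups of G of prime order. If ∑_{H ∈ S} 1/|H| < 1 + (|S| − 1)/|G| (as an inequality of rational numbers), then the Radon transform is not injective on G. -/
open scoped Classical

section Aux
variable {G : Type*} [Group G] [Fintype G]

/-- If all sums of `f` over left cosets of prime-order subgroups vanish, then all
Radon transforms of `f` vanish. -/
lemma radonNull_of_cosetSums (S : Finset (Subgroup G))
    (hS : ∀ H : Subgroup G, H ∈ S ↔ ∃ p : ℕ, p.Prime ∧ Nat.card H = p) (f : G → ℂ)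
    (hf : ∀ H ∈ S, ∀ x : G, ∑ h : H, f (x * h) = 0) : RadonNull G f := by
  intro n hn γ hγ x
  haveI : NeZero n := ⟨by omega⟩
  obtain ⟨a, ha⟩ : ∃ a, γ a ≠ 1 := by
    by_contra h
    push_neg at h
    exact hγ (MonoidHom.ext h)
  set y := γ a with hy
  have hym : orderOf y ≠ 1 := by
    simpa [orderOf_eq_one_iff] using ha
  set m := orderOf y with hm
  set p := m.minFac with hp
  have hpp : p.Prime := Nat.minFac_prime hym
  have hpd : p ∣ m := Nat.minFac_dvd m
  set g := y ^ (m / p) with hg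
  have hgo : orderOf g = p := by
    rw [hg, orderOf_pow, ← hm, Nat.gcd_eq_right (Nat.div_dvd_of_dvd hpd),
      Nat.div_div_self hpd (orderOf_pos y).ne']
  set P := Subgroup.zpowers g with hP
  have hPS : P ∈ S := (hS P).mpr ⟨p, hpp, by rw [hP, Nat.card_zpowers, hgo]⟩
  have hPle : P ≤ γ.range :=
    Subgroup.zpowers_le.mpr (pow_mem (show y ∈ γ.range from ⟨a, rfl⟩) _)
  have key : ∀ h : P, radonSum f γ x
      = ∑ t : ZMod n, f (x * γ (Multiplicative.ofAdd t) * (h : G)) := by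
    intro h
    obtain ⟨s, hs⟩ := hPle h.2
    rw [radonSum, ← Equiv.sum_comp (Equiv.addRight (Multiplicative.toAdd s))]
    refine Finset.sum_congr rfl fun t _ => ?_
    simp only [Equiv.coe_addRight]
    rw [show Multiplicative.ofAdd (t + Multiplicative.toAdd s)
        = Multiplicative.ofAdd t * s by rfl, map_mul, hs, mul_assoc]
  have hcard : (Fintype.card P : ℂ) ≠ 0 := by
    exact_mod_cast Fintype.card_ne_zero
  have : (Fintype.card P : ℂ) * radonSum f γ x = 0 := by
    calc (Fintype.card P : ℂ) * radonSum f γ x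
        = ∑ _h : P, radonSum f γ x := by rw [Finset.sum_const, Finset.card_univ, nsmul_eq_mul]
      _ = ∑ h : P, ∑ t : ZMod n, f (x * γ (Multiplicative.ofAdd t) * (h : G)) :=
          Finset.sum_congr rfl fun h _ => key h
      _ = ∑ t : ZMod n, ∑ h : P, f (x * γ (Multiplicative.ofAdd t) * (h : G)) := Finset.sum_comm
      _ = 0 := Finset.sum_eq_zero fun t _ => hf P hPS _
  exact (mul_eq_zero.mp this).resolve_left hcard

/-- The sum of `f` over the left coset of `H` represented by `q`. -/
noncomputable def cosetSum (f : G → ℂ) (H : Subgroup G) (q : G ⧸ H) : ℂ :=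
  ∑ g ∈ Finset.univ.filter (fun g : G => (QuotientGroup.mk g : G ⧸ H) = q), f g

lemma cosetSum_mk (f : G → ℂ) (H : Subgroup G) (x : G) :
    cosetSum f H (x : G ⧸ H) = ∑ h : H, f (x * h) := by
  rw [cosetSum]
  refine (Finset.sum_bij (fun (h : H) _ => x * (h : G)) ?_ ?_ ?_ ?_).symm
  · intro h _
    simp [QuotientGroup.mk_mul_of_mem x h.2]
  · intro h1 _ h2 _ he
    exact Subtype.ext (mul_left_cancel he)
  · intro g hg
    simp only [Finset.mem_filter, Finset.mem_univ, true_and] at hg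
    exact ⟨⟨x⁻¹ * g, (QuotientGroup.eq.mp hg.symm)⟩, Finset.mem_univ _, by group⟩
  · intro h _; rfl

lemma sum_cosetSum (f : G → ℂ) (H : Subgroup G) :
    ∑ q : G ⧸ H, cosetSum f H q = ∑ g, f g := by
  rw [← Finset.sum_fiberwise Finset.univ (fun g : G => (QuotientGroup.mk g : G ⧸ H)) f]
  rfl

variable (S : Finset (Subgroup G))

/-- The linear map recording the total sum of `f` together with all coset sums over
subgroups in `S` (away from the identity coset). -/
noncomputable def radonT : (G → ℂ) →ₗ[ℂ]
    ℂ × (∀ H : {H // H ∈ S},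
      ({q : G ⧸ (H : Subgroup G) // q ≠ ((1:G):G ⧸ (H : Subgroup G))} → ℂ)) where
  toFun f := (∑ g, f g, fun H q => cosetSum f H q.1)
  map_add' f g := by
    refine Prod.ext (by simp [Finset.sum_add_distrib]) ?_
    funext H q
    simp [cosetSum, Finset.sum_add_distrib]
  map_smul' c f := by
    refine Prod.ext (by simp [Finset.mul_sum]) ?_
    funext H q
    simp [cosetSum, Finset.mul_sum]

lemma radonT_ker (f : G → ℂ) (h0 : radonT S f = 0) :
    ∀ H ∈ S, ∀ x : G, ∑ h : H, f (x * h) = 0 := by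
  have h1 : ∑ g, f g = 0 := congrArg Prod.fst h0
  have h2 : ∀ (H : Subgroup G) (_ : H ∈ S) (q : G ⧸ H),
      q ≠ ((1:G):G ⧸ H) → cosetSum f H q = 0 := by
    intro H hH q hq
    exact congrFun (congrFun (congrArg Prod.snd h0) ⟨H, hH⟩) ⟨q, hq⟩
  have h3 : ∀ (H : Subgroup G) (_ : H ∈ S) (q : G ⧸ H), cosetSum f H q = 0 := by
    intro H hH q
    rcases eq_or_ne q (((1:G):G ⧸ H)) with rfl | hq
    · have := sum_cosetSum f H
      rwa [Finset.sum_eq_single_of_mem ((1:G):G ⧸ H) (Finset.mem_univ _)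
        (fun q _ hq => h2 H hH q hq), h1] at this
    · exact h2 H hH q hq
  intro H hH x
  rw [← cosetSum_mk, h3 H hH]

lemma radonT_finrank :
    Module.finrank ℂ (ℂ × (∀ H : {H // H ∈ S},
        ({q : G ⧸ (H : Subgroup G) // q ≠ ((1:G):G ⧸ (H : Subgroup G))} → ℂ)))
      = 1 + ∑ H ∈ S, (Nat.card (G ⧸ H) - 1) := by
  rw [Module.finrank_prod, Module.finrank_self, Module.finrank_pi_fintype]
  congr 1
  rw [← Finset.sum_attach S (fun H => Nat.card (G ⧸ H) - 1)]
  rw [show (Finset.univ : Finset {H // H ∈ S}) = S.attach from rfl]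
  refine Finset.sum_congr rfl fun H _ => ?_
  rw [Module.finrank_fintype_fun_eq_card]
  have : Fintype.card {q : G ⧸ (H : Subgroup G) // ¬ q = ((1:G):G ⧸ (H : Subgroup G))} =
      Fintype.card (G ⧸ (H : Subgroup G)) -
        Fintype.card {q : G ⧸ (H : Subgroup G) // q = ((1:G):G ⧸ (H : Subgroup G))} :=
    Fintype.card_subtype_compl _
  simp only [ne_eq]
  rw [this, Fintype.card_subtype_eq, Nat.card_eq_fintype_card]

end Aux

theorem radon_not_injective_of_count (G : Type*) [Group G] [Fintype G]
    (S : Finset (Subgroup G))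
    (hS : ∀ H : Subgroup G, H ∈ S ↔ ∃ p : ℕ, p.Prime ∧ Nat.card H = p)
    (hlt : ∑ H ∈ S, ((Nat.card H : ℚ))⁻¹ <
        1 + ((S.card : ℚ) - 1) / (Fintype.card G : ℚ)) :
    ¬ RadonInjective G := by
  intro hinj
  -- the kernel of `radonT S` is trivial
  have hker : ∀ f : G → ℂ, radonT S f = 0 → f = 0 := fun f h0 =>
    hinj f (radonNull_of_cosetSums S hS f (radonT_ker S f h0))
  have hTinj : Function.Injective (radonT (G := G) S) :=
    LinearMap.ker_eq_bot.mp (LinearMap.ker_eq_bot'.mpr hker)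
  have hle := LinearMap.finrank_le_finrank_of_injective hTinj
  rw [Module.finrank_fintype_fun_eq_card, radonT_finrank] at hle
  -- now derive a contradiction by counting
  have hN0 : (0:ℚ) < (Fintype.card G : ℚ) := by exact_mod_cast Fintype.card_pos
  -- cast the dimension inequality to ℚ
  have hq1 : ∀ H ∈ S, 1 ≤ Nat.card (G ⧸ H) := fun H _ => Nat.one_le_iff_ne_zero.mpr
    Nat.card_pos.ne'
  have hle' : (Fintype.card G : ℚ) ≤ 1 + ∑ H ∈ S, ((Nat.card (G ⧸ H) : ℚ) - 1) := by
    calc (Fintype.card G : ℚ) ≤ ((1 + ∑ H ∈ S, (Nat.card (G ⧸ H) - 1) : ℕ) : ℚ) := by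
          exact_mod_cast hle
      _ = 1 + ∑ H ∈ S, ((Nat.card (G ⧸ H) : ℚ) - 1) := by
          push_cast
          refine congrArg (1 + ·) (Finset.sum_congr rfl fun H hH => ?_)
          rw [Nat.cast_sub (hq1 H hH)]
          norm_num
  -- Lagrange: card (G ⧸ H) = card G / card H
  have hlag : ∀ H ∈ S, (Nat.card (G ⧸ H) : ℚ)
      = (Fintype.card G : ℚ) * ((Nat.card H : ℚ))⁻¹ := by
    intro H hH
    obtain ⟨p, hp, hcard⟩ := (hS H).mp hH
    have hc0 : ((Nat.card H : ℚ)) ≠ 0 := by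
      rw [hcard]; exact_mod_cast hp.ne_zero
    have := Subgroup.card_eq_card_quotient_mul_card_subgroup H
    rw [Nat.card_eq_fintype_card (α := G)] at this
    have hGq : (Fintype.card G : ℚ) = (Nat.card (G ⧸ H) : ℚ) * (Nat.card H : ℚ) := by
      exact_mod_cast this
    rw [hGq, mul_assoc, mul_inv_cancel₀ hc0, mul_one]
  rw [Finset.sum_congr rfl (fun H hH => by rw [hlag H hH])] at hle'
  rw [Finset.sum_sub_distrib, ← Finset.mul_sum] at hle'
  simp only [Finset.sum_const, nsmul_eq_mul, mul_one] at hle'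
  -- multiply `hlt` through by `card G`
  have hlt' : (Fintype.card G : ℚ) * ∑ H ∈ S, ((Nat.card H : ℚ))⁻¹
      < (Fintype.card G : ℚ) + ((S.card : ℚ) - 1) := by
    have := mul_lt_mul_of_pos_left hlt hN0
    rwa [mul_add, mul_one, mul_div_cancel₀ _ hN0.ne'] at this
  linarith
end

section
/- Let f : ℤ → ℂ be a summable function. If for every integer m ≥ 1 and every n ∈ ℤ the sum of f over the coset n + mℤ vanishes, i.e. ∑'_{t ∈ ℤ} f(n + m·t) = 0, then f = 0. (The Radon transform on ℤ is injective on ℓ¹(ℤ); indeed f(n) = lim_{m→∞} ∑'_{t ∈ ℤ} f(n + m·t).) -/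
theorem radon_injective_int (f : ℤ → ℂ) (hf : Summable f)
    (h : ∀ m : ℕ, 1 ≤ m → ∀ n : ℤ, ∑' t : ℤ, f (n + m * t) = 0) :
    f = 0 := by
  funext n
  by_contra hne
  have hε : (0:ℝ) < ‖f n‖ := by simpa using hne
  have hnorm : Summable fun k : ℤ => ‖f k‖ := hf.norm
  obtain ⟨s, hs⟩ := ((tendsto_order.1 (tendsto_tsum_compl_atTop_zero (fun k : ℤ => ‖f k‖))).2 _ hε).exists
  set M : ℕ := s.sup fun k => (k - n).natAbs with hM
  set m : ℕ := M + 1 with hm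
  have hm1 : 1 ≤ m := Nat.le_add_left 1 M
  have hm0 : (m : ℤ) ≠ 0 := by positivity
  have hinj : Function.Injective fun t : ℤ => n + (m : ℤ) * t := by
    intro a b hab
    simp only at hab
    exact mul_left_cancel₀ hm0 (by linarith)
  have hsum : Summable fun t : ℤ => f (n + (m : ℤ) * t) := hf.comp_injective hinj
  have key := h m hm1 n
  have hsplit := Summable.tsum_eq_add_tsum_ite hsum 0
  rw [key] at hsplit
  simp only [mul_zero, add_zero] at hsplit
  have hfn : f n = -∑' t : ℤ, if t = 0 then 0 else f (n + (m : ℤ) * t) :=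
    eq_neg_of_add_eq_zero_left hsplit.symm
  -- avoidance: for t ≠ 0, n + m*t ∉ s
  have havoid : ∀ t : ℤ, t ≠ 0 → n + (m : ℤ) * t ∉ s := by
    intro t ht hmem
    have h1 : ((n + (m : ℤ) * t) - n).natAbs ≤ M := Finset.le_sup (f := fun k => (k - n).natAbs) hmem
    have h2 : ((n + (m : ℤ) * t) - n).natAbs = m * t.natAbs := by
      simp [Int.natAbs_mul]
    have h3 : 1 ≤ t.natAbs := Nat.one_le_iff_ne_zero.2 (by simpa using ht)
    have : m ≤ m * t.natAbs := Nat.le_mul_of_pos_right m h3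
    omega
  -- summability of the ite functions
  have hsumL : Summable fun t : ℤ => if t = 0 then 0 else ‖f (n + (m : ℤ) * t)‖ :=
    hsum.norm.summable_of_eq_zero_or_self (fun t => by by_cases ht : t = 0 <;> simp [ht])
  have hsumR : Summable fun k : ℤ => if k ∈ s then 0 else ‖f k‖ :=
    hnorm.summable_of_eq_zero_or_self (fun k => by by_cases hk : k ∈ s <;> simp [hk])
  -- bound ‖f n‖ by the LHS tsum
  have hb1 : ‖f n‖ ≤ ∑' t : ℤ, (if t = 0 then 0 else ‖f (n + (m : ℤ) * t)‖) := by
    rw [hfn, norm_neg]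
    calc ‖∑' t : ℤ, if t = 0 then 0 else f (n + (m : ℤ) * t)‖
        ≤ ∑' t : ℤ, ‖if t = 0 then 0 else f (n + (m : ℤ) * t)‖ :=
          norm_tsum_le_tsum_norm (by
            convert hsumL using 2 with t
            by_cases ht : t = 0 <;> simp [ht])
      _ = ∑' t : ℤ, (if t = 0 then 0 else ‖f (n + (m : ℤ) * t)‖) := by
          congr 1; funext t; by_cases ht : t = 0 <;> simp [ht]
  -- compare with the tail sum via the injection
  have hb2 : ∑' t : ℤ, (if t = 0 then 0 else ‖f (n + (m : ℤ) * t)‖)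
      ≤ ∑' k : ℤ, (if k ∈ s then 0 else ‖f k‖) := by
    refine Summable.tsum_le_tsum_of_inj (fun t : ℤ => n + (m : ℤ) * t) hinj
      (fun k _ => by by_cases hk : k ∈ s <;> simp [hk]) ?_ hsumL hsumR
    intro t
    by_cases ht : t = 0
    · simp only [ht, if_true]
      split <;> positivity
    · simp [ht, havoid t ht]
  -- identify the tail sum
  have hb3 : ∑' k : ℤ, (if k ∈ s then 0 else ‖f k‖) = ∑' k : {x // x ∉ s}, ‖f (k : ℤ)‖ := by
    rw [show (∑' k : {x // x ∉ s}, ‖f (k : ℤ)‖)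
        = ∑' k : ℤ, ({x | x ∉ s} : Set ℤ).indicator (fun k => ‖f k‖) k from
      tsum_subtype ({x | x ∉ s} : Set ℤ) (fun k => ‖f k‖)]
    congr 1; funext k
    by_cases hk : k ∈ s <;> simp [Set.indicator, hk]
  have : ‖f n‖ < ‖f n‖ := by
    calc ‖f n‖ ≤ _ := hb1
      _ ≤ _ := hb2
      _ = _ := hb3
      _ < ‖f n‖ := hs
  exact lt_irrefl _ this
end

section
/- Let G₁ be a nontrivial finite cyclic group and G₂ a finite group with |G₁| and |G₂| coprime. Then the maximal Radon transform is not injective on G₁ × G₂: there exists a nonzero function f : G₁ × G₂ → ℂ such that for every maximal cyclic subgroup C of G₁ × G₂ and every x ∈ G₁ × G₂ one has ∑_{c ∈ C} f(x * c) = 0. -/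
/-- A subgroup is a maximal cyclic subgroup if it is cyclic and not properly
contained in any larger cyclic subgroup. -/
def IsMaximalCyclic {G : Type*} [Group G] (C : Subgroup G) : Prop :=
  IsCyclic C ∧ ∀ D : Subgroup G, IsCyclic D → C ≤ D → C = D

/-- All maximal Radon transforms of `f` (sums over all cosets of maximal cyclic
subgroups) vanish. -/
def MaxRadonNull (G : Type*) [Group G] [Fintype G] (f : G → ℂ) : Prop :=
  ∀ C : Subgroup G, IsMaximalCyclic C → ∀ x : G,
    ∑ c ∈ (C : Set G).toFinite.toFinset, f (x * c) = 0

/-!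
By coprimality, for every cyclic `C ≤ G₁ × G₂` the subgroup `G₁ × snd(C)` is again cyclic
and contains `C`; so every maximal cyclic subgroup contains `G₁ × 1`. Hence a nontrivial
character `χ` of `G₁`, pulled back along the first projection, is nontrivial on every maximal
cyclic subgroup, and its sums over their cosets vanish by orthogonality.
-/

section Prod

variable {G₁ G₂ : Type*} [Group G₁] [Group G₂] [IsCyclic G₁]

theorem isCyclic_top_prod_of_coprime (K : Subgroup G₂) [IsCyclic K]
    (h : (Nat.card G₁).Coprime (Nat.card G₂)) : IsCyclic ((⊤ : Subgroup G₁).prod K) := by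
  rw [(Subgroup.prodEquiv _ _).isCyclic, Group.isCyclic_prod_iff, Subgroup.card_top]
  exact ⟨inferInstance, inferInstance, h.coprime_dvd_right K.card_subgroup_dvd_card⟩

theorem IsMaximalCyclic.eq_top_prod_map_snd {C : Subgroup (G₁ × G₂)} (hC : IsMaximalCyclic C)
    (h : (Nat.card G₁).Coprime (Nat.card G₂)) :
    C = (⊤ : Subgroup G₁).prod (C.map (MonoidHom.snd G₁ G₂)) := by
  have : IsCyclic C := hC.1
  have : IsCyclic (C.map (MonoidHom.snd G₁ G₂)) :=
    isCyclic_of_surjective _ ((MonoidHom.snd G₁ G₂).subgroupMap_surjective C)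
  exact hC.2 _ (isCyclic_top_prod_of_coprime _ h) (Subgroup.le_prod_iff.mpr ⟨le_top, le_rfl⟩)

theorem IsMaximalCyclic.mk_one_mem {C : Subgroup (G₁ × G₂)} (hC : IsMaximalCyclic C)
    (h : (Nat.card G₁).Coprime (Nat.card G₂)) (a : G₁) : ((a, 1) : G₁ × G₂) ∈ C := by
  rw [hC.eq_top_prod_map_snd h]
  exact Subgroup.mem_prod.mpr ⟨Subgroup.mem_top a, one_mem _⟩

end Prod

theorem MonoidHom.sum_mul_subgroup_eq_zero {G R : Type*} [Group G] [Finite G] [CommRing R]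
    [IsDomain R] (χ : G →* R) {C : Subgroup G} {c : G} (hc : c ∈ C) (hχc : χ c ≠ 1) (x : G) :
    ∑ y ∈ (C : Set G).toFinite.toFinset, χ (x * y) = 0 := by
  let instC : Fintype C := Fintype.ofFinite C
  have hne : χ.comp C.subtype ≠ 1 := fun h1 => hχc (DFunLike.congr_fun h1 ⟨c, hc⟩)
  calc ∑ y ∈ (C : Set G).toFinite.toFinset, χ (x * y)
      = ∑ y : C, χ x * χ.comp C.subtype y := by
        rw [Finset.sum_subtype (F := instC) _ (fun y => Set.Finite.mem_toFinset _)]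
        simp only [map_mul, MonoidHom.coe_comp, Subgroup.coe_subtype, Function.comp_apply]
    _ = 0 := by rw [← Finset.mul_sum, sum_hom_units_eq_zero _ hne, mul_zero]

theorem IsCyclic.exists_monoidHom_units_complex_apply_ne_one {G : Type*} [Group G] [IsCyclic G]
    [Finite G] {a : G} (ha : a ≠ 1) : ∃ χ : G →* ℂˣ, χ a ≠ 1 :=
  IsCyclic.exists_apply_ne_one
    ⟨_, (Complex.isPrimitiveRoot_exp _ Nat.card_pos.ne').isUnit_unit Nat.card_pos.ne'⟩ ha

theorem max_radon_not_injective_of_cyclic_factor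
    (G₁ G₂ : Type*) [Group G₁] [Group G₂] [Fintype G₁] [Fintype G₂]
    [IsCyclic G₁] [Nontrivial G₁]
    (h : Nat.Coprime (Fintype.card G₁) (Fintype.card G₂)) :
    ∃ f : G₁ × G₂ → ℂ, f ≠ 0 ∧ MaxRadonNull (G₁ × G₂) f := by
  rw [Fintype.card_eq_nat_card, Fintype.card_eq_nat_card] at h
  obtain ⟨a, ha⟩ := exists_ne (1 : G₁)
  obtain ⟨χ, hχa⟩ := IsCyclic.exists_monoidHom_units_complex_apply_ne_one ha
  let ψ : G₁ × G₂ →* ℂ := (Units.coeHom ℂ).comp (χ.comp (MonoidHom.fst G₁ G₂))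
  refine ⟨ψ, fun hψ => (χ a).ne_zero (congrFun hψ (a, 1)), fun C hC x => ?_⟩
  exact ψ.sum_mul_subgroup_eq_zero (hC.mk_one_mem h a) (fun h1 => hχa (Units.ext h1)) x
end

section
/- Let G be a finite group and H a normal subgroup of G such that no cyclic subgroup of H is a maximal cyclic subgroup of G. If the maximal Radon transform is injective on G, then the (ordinary) Radon transform is injective on the quotient group G/H. -/
theorem radon_injective_quotient {G : Type*} [Group G] [Fintype G]
    (H : Subgroup G) [H.Normal]
    (hH : ∀ C : Subgroup G, C ≤ H → IsCyclic C → ¬ IsMaximalCyclic C)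
    (hinj : ∀ f : G → ℂ, MaxRadonNull G f → f = 0) :
    RadonInjective (G ⧸ H) := by
  intro f hf
  have hF : (fun x : G => f (QuotientGroup.mk x)) = 0 := by
    apply hinj
    intro C hC x
    obtain ⟨⟨g0, hg0⟩⟩ := hC.1
    set g : G := (g0 : G) with hg
    have hCg : C = Subgroup.zpowers g := by
      ext c
      constructor
      · intro hc
        obtain ⟨k, hk⟩ := hg0 ⟨c, hc⟩
        exact ⟨k, congrArg Subtype.val hk⟩
      · intro hc
        exact (Subgroup.zpowers_le.mpr g0.2) hc
    have hgH : g ∉ H := by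
      intro hmem
      exact hH C (hCg ▸ Subgroup.zpowers_le.mpr hmem) hC.1 hC
    have hg1 : g ≠ 1 := fun h => hgH (h ▸ H.one_mem)
    set n := orderOf g with hn
    have hn2 : 2 ≤ n := by
      have h1 : n ≠ 1 := fun h => hg1 (orderOf_eq_one_iff.mp h)
      have h0 : 0 < n := orderOf_pos g
      omega
    haveI : NeZero n := ⟨by omega⟩
    set q : G ⧸ H := QuotientGroup.mk g with hqdef
    have hqn : q ^ (n : ℤ) = 1 := by
      rw [zpow_natCast, hqdef, ← QuotientGroup.mk_pow, hn, pow_orderOf_eq_one,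
        QuotientGroup.mk_one]
    set φ : ZMod n →+ Additive (G ⧸ H) :=
      ZMod.lift n ⟨zmultiplesHom (Additive (G ⧸ H)) (Additive.ofMul q), by
        rw [zmultiplesHom_apply, ← ofMul_zpow, hqn, ofMul_one]⟩ with hφ
    set γ : Multiplicative (ZMod n) →* G ⧸ H := AddMonoidHom.toMultiplicativeLeft φ with hγdef
    have hγ : ∀ k : ℤ, γ (Multiplicative.ofAdd ((k : ZMod n))) = q ^ k := by
      intro k
      show Additive.toMul (φ ((k : ZMod n))) = q ^ k
      rw [hφ, ZMod.lift_coe, zmultiplesHom_apply, ← ofMul_zpow, toMul_ofMul]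
    have hγt : ∀ t : ZMod n, γ (Multiplicative.ofAdd t) = q ^ (t.val : ℤ) := by
      intro t
      have : ((t.val : ℤ) : ZMod n) = t := by
        push_cast
        exact ZMod.natCast_rightInverse t
      conv_lhs => rw [← this]
      rw [hγ]
    have hγne : γ ≠ 1 := by
      intro h
      apply hgH
      have h1 : γ (Multiplicative.ofAdd ((1 : ℤ) : ZMod n)) = 1 := by rw [h]; rfl
      rw [hγ, zpow_one, hqdef] at h1
      exact (QuotientGroup.eq_one_iff g).mp h1
    have h0 := hf n hn2 γ hγne (QuotientGroup.mk x)
    rw [radonSum] at h0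
    have hsum : ∑ t : ZMod n,
        f (QuotientGroup.mk x * γ (Multiplicative.ofAdd t)) =
        ∑ c ∈ ((C : Set G).toFinite.toFinset), f (QuotientGroup.mk (x * c)) := by
      refine Finset.sum_bij (fun t _ => g ^ (t.val : ℤ)) ?_ ?_ ?_ ?_
      · intro t _
        rw [Set.Finite.mem_toFinset, SetLike.mem_coe, hCg]
        exact ⟨(t.val : ℤ), rfl⟩
      · intro a _ b _ hab
        rw [zpow_natCast, zpow_natCast, pow_eq_pow_iff_modEq, ← hn] at hab
        have ha := ZMod.val_lt a
        have hb := ZMod.val_lt b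
        have : a.val = b.val := by
          have : a.val % n = b.val % n := hab
          rwa [Nat.mod_eq_of_lt ha, Nat.mod_eq_of_lt hb] at this
        exact ZMod.val_injective n this
      · intro c hc
        rw [Set.Finite.mem_toFinset, SetLike.mem_coe, hCg] at hc
        obtain ⟨k, hk⟩ := hc
        refine ⟨(k : ZMod n), Finset.mem_univ _, ?_⟩
        rw [← hk, zpow_eq_zpow_iff_modEq, ← hn]
        rw [← ZMod.intCast_eq_intCast_iff]
        push_cast
        exact ZMod.natCast_rightInverse _
      · intro t _
        rw [hγt, hqdef, ← QuotientGroup.mk_zpow, ← QuotientGroup.mk_mul]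
    rw [hsum] at h0
    exact h0
  funext y
  obtain ⟨x, rfl⟩ := QuotientGroup.mk_surjective y
  exact congrFun hF x
end
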